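/- Reduced-cipher homomorphic multiplication: for ciphers C₁, C₂ ∈ {0,1}^{N×N} with N = ℓ(n+1), the reduced cipher of the homomorphic product C₄ = [(C₁ · C₂) · G_{n+1}]^ℓ satisfies C₄ · G_{n+1} = (C₁ · C̃₂)^ℓ, where C̃₂ = C₂ · G_{n+1}. -/
import Mathlib


open Matrix

/-- The gadget matrix `G_n = I_n ⊗ g` with `g = (2^0, …, 2^(ℓ-1))ᵀ`. -/
def gadget (R : Type*) [Semiring R] (n ℓ : ℕ) : Matrix (Fin n × Fin ℓ) (Fin n) R :=
  fun p k => if p.1 = k then 2 ^ (p.2 : ℕ) else 0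

/-- Entrywise decomposition of a matrix into `ℓ` binary digits (`BitDecomp`). -/
def bitDecomp {ρ : Type*} (n ℓ : ℕ) (a : Matrix ρ (Fin n) ℕ) :
    Matrix ρ (Fin n × Fin ℓ) ℕ :=
  fun r p => ((a r p.1).testBit p.2).toNat

/-- Entrywise truncation `(·)^ℓ` to the `ℓ` least significant bits. -/
def truncM {ρ κ : Type*} (ℓ : ℕ) (M : Matrix ρ κ ℕ) : Matrix ρ κ ℕ :=
  M.map (· % 2 ^ ℓ)

lemma sum_testBit (m ℓ : ℕ) :
    ∑ j ∈ Finset.range ℓ, (m.testBit j).toNat * 2 ^ j = m % 2 ^ ℓ := by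
  induction ℓ with
  | zero => simp [Nat.mod_one]
  | succ ℓ ih =>
      rw [Finset.sum_range_succ, ih, Nat.pow_succ, Nat.mod_mul, Nat.testBit_eq_decide_div_mod_eq]
      rcases Nat.mod_two_eq_zero_or_one (m / 2 ^ ℓ) with h | h <;> simp [h] <;> ring

lemma bitDecomp_mul_gadget {n ℓ : ℕ} {ρ : Type*}
    (a : Matrix ρ (Fin n) ℕ) :
    (bitDecomp n ℓ a) * gadget ℕ n ℓ = truncM ℓ a := by
  ext r k
  simp only [Matrix.mul_apply, bitDecomp, gadget, truncM, Matrix.map_apply,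
    Fintype.sum_prod_type, mul_ite, mul_zero]
  rw [Finset.sum_eq_single k]
  · simp only [if_true]
    rw [Fin.sum_univ_eq_sum_range (fun j => ((a r k).testBit j).toNat * 2 ^ j)]
    exact sum_testBit (a r k) ℓ
  · intro b _ hb
    simp [hb]
  · simp

/-- Reduced-cipher homomorphic multiplication: for binary ciphers `C₁ C₂`,
the homomorphic product `C₄ = [(C₁·C₂)·G]^ℓ` satisfies `C₄·G = (C₁·C̃₂)^ℓ`
where `C̃₂ = C₂·G`. -/
theorem reduced_cipher_mul (n ℓ : ℕ)
    (C₁ C₂ : Matrix (Fin (n + 1) × Fin ℓ) (Fin (n + 1) × Fin ℓ) ℕ)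
    (h₁ : ∀ p q, C₁ p q ≤ 1) (h₂ : ∀ p q, C₂ p q ≤ 1) :
    (bitDecomp (n + 1) ℓ ((C₁ * C₂) * gadget ℕ (n + 1) ℓ)) * gadget ℕ (n + 1) ℓ =
      truncM ℓ (C₁ * (C₂ * gadget ℕ (n + 1) ℓ)) := by
  rw [← Matrix.mul_assoc, bitDecomp_mul_gadget]
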